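/- Let n be an odd natural number. Then C_{U(n)}(n) = 2^{Ω(n)}; that is: (i) every sequence of length 2^{Ω(n)} in Z_n has a nonempty subsequence of consecutive terms which is a U(n)-weighted zero-sum sequence; and (ii) there exists a sequence of length 2^{Ω(n)} − 1 in Z_n having no nonempty subsequence of consecutive terms which is a U(n)-weighted zero-sum sequence. -/

import Mathlib

/-- A list `L` over `ZMod n` is an `A`-weighted zero-sum sequence if there are weights
`a₁, …, a_k ∈ A` (one per term) with `a₁x₁ + ⋯ + a_kx_k = 0`. -/
def IsWeightedZeroSum {n : ℕ} (A : Set (ZMod n)) (L : List (ZMod n)) : Prop :=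
  ∃ a : List (ZMod n), a.length = L.length ∧ (∀ w ∈ a, w ∈ A) ∧
    (List.zipWith (· * ·) a L).sum = 0

/-- `L` has a nonempty subsequence of consecutive terms which is an
`A`-weighted zero-sum sequence. -/
def HasConsecWZS {n : ℕ} (A : Set (ZMod n)) (L : List (ZMod n)) : Prop :=
  ∃ l₁ l₂ l₃ : List (ZMod n), L = l₁ ++ l₂ ++ l₃ ∧ l₂ ≠ [] ∧ IsWeightedZeroSum A l₂

/-!
Write `n = p m` with `p` prime. Call a nonempty block of consecutive terms good if the number
of its terms that are nonzero modulo `p` is not one. Since `p` is odd, any two nonzero residues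
can be unit-weighted to any prescribed sum, so every good block has a unit-weighted sum `p y`.
Cutting a sequence into good blocks from its start and, alternatively, from just after its first
term nonzero modulo `p` (joining consecutive such terms, with everything between them, into one
block) yields at least `ℓ - 1` blocks in total, so `2^{Ω(m)}` adjacent good blocks sit in any
sequence of length `ℓ = 2^{Ω(n)}`. A zero sum modulo `m` of consecutive `y`'s with unit weights,
lifted to units modulo `n`, then weights the union of those blocks to `p · 0 = 0`.

Conversely, `S_n = p S_m, 1, p S_m` has no such zero sum: a block through the middle term has
exactly one term that is nonzero modulo `p`, and a block inside a copy of `p S_m` has the form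
`p l` with `l` a block of `S_m`, whose weighted sum vanishes modulo `n` only if it does modulo `m`.
-/

open Pointwise

section WeightedSums

variable {R S : Type*}

def weightedSums [Semiring R] (A : Set R) : List R → Set R
  | [] => {0}
  | x :: L => (· * x) '' A + weightedSums A L

abbrev unitWeightedSums [Semiring R] (L : List R) : Set R := weightedSums {x | IsUnit x} L

section Semiring

variable [Semiring R] [Semiring S] {A : Set R}

@[simp]
lemma weightedSums_nil : weightedSums A [] = {0} := rfl

@[simp]
lemma weightedSums_cons (x : R) (L : List R) :
    weightedSums A (x :: L) = (· * x) '' A + weightedSums A L := rfl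

lemma weightedSums_append (L₁ L₂ : List R) :
    weightedSums A (L₁ ++ L₂) = weightedSums A L₁ + weightedSums A L₂ := by
  induction L₁ with
  | nil => simp [Set.singleton_zero]
  | cons x L ih => simp [ih, add_assoc]

lemma image_weightedSums (g : R →+* S) (L : List R) :
    g '' weightedSums A L = weightedSums (g '' A) (L.map g) := by
  induction L with
  | nil => simp
  | cons x L ih => simp [Set.image_add, ih, Set.image_image]

lemma mem_weightedSums_iff {s : R} {L : List R} :
    s ∈ weightedSums A L ↔ ∃ a : List R, a.length = L.length ∧ (∀ w ∈ a, w ∈ A) ∧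
      (List.zipWith (· * ·) a L).sum = s := by
  induction L generalizing s with
  | nil => simp [eq_comm]
  | cons x L ih =>
    simp only [weightedSums_cons, Set.mem_add, Set.mem_image, ih]
    constructor
    · rintro ⟨_, ⟨w, hw, rfl⟩, _, ⟨a, ha, haA, rfl⟩, rfl⟩
      exact ⟨w :: a, by simp [ha], List.forall_mem_cons.2 ⟨hw, haA⟩, by simp⟩
    · rintro ⟨_ | ⟨w, a⟩, ha, haA, rfl⟩
      · simp at ha
      · exact ⟨_, ⟨w, haA w (by simp), rfl⟩, _,
          ⟨a, by simpa using ha, fun v hv => haA v (by simp [hv]), rfl⟩, by simp⟩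

lemma mul_mem_weightedSums {c s : R} {L : List R} (hA : ∀ a ∈ A, c * a ∈ A)
    (hs : s ∈ weightedSums A L) : c * s ∈ weightedSums A L := by
  induction L generalizing s with
  | nil => simp_all
  | cons x L ih =>
    obtain ⟨_, ⟨a, ha, rfl⟩, s', hs', rfl⟩ := hs
    exact ⟨_, ⟨c * a, hA a ha, rfl⟩, _, ih hs', by simp [mul_add, mul_assoc]⟩

lemma eq_zero_of_mem_weightedSums {s : R} {L : List R} (hL : ∀ x ∈ L, x = 0)
    (hs : s ∈ weightedSums A L) : s = 0 := by
  induction L generalizing s with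
  | nil => simpa using hs
  | cons x L ih =>
    obtain ⟨_, ⟨a, -, rfl⟩, s', hs', rfl⟩ := hs
    simp [hL x (by simp), ih (fun y hy => hL y (by simp [hy])) hs']

lemma map_mem_unitWeightedSums (g : R →+* S) {s : R} {L : List R}
    (hs : s ∈ unitWeightedSums L) : g s ∈ unitWeightedSums (L.map g) := by
  induction L generalizing s with
  | nil => simp_all
  | cons x L ih =>
    obtain ⟨_, ⟨a, ha, rfl⟩, s', hs', rfl⟩ := hs
    exact ⟨_, ⟨g a, ha.map g, rfl⟩, _, ih hs', by simp⟩

end Semiring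

lemma weightedSums_map_mul_left [CommSemiring R] {A : Set R} (c : R) (L : List R) :
    weightedSums A (L.map (c * ·)) = (c * ·) '' weightedSums A L := by
  induction L with
  | nil => simp
  | cons x L ih =>
    rw [List.map_cons, weightedSums_cons, weightedSums_cons, ih, ← AddMonoidHom.coe_mulLeft,
      Set.image_add, Set.image_image]
    simp [mul_left_comm]

end WeightedSums

lemma mem_unitWeightedSums_of_countP {K : Type*} [Field K] [DecidableEq K] (h2 : (2 : K) ≠ 0)
    {t : K} {L : List K} (h0 : L.countP (· ≠ 0) = 0 → t = 0)
    (h1 : L.countP (· ≠ 0) = 1 → t ≠ 0) : t ∈ unitWeightedSums L := by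
  induction L generalizing t with
  | nil => simpa using h0 (by simp)
  | cons x L ih =>
    by_cases hx : x = 0
    · subst hx
      simp only [List.countP_cons, ne_eq, not_true_eq_false, decide_false] at h0 h1
      exact ⟨0, ⟨1, isUnit_one, by simp⟩, t, ih h0 h1, zero_add t⟩
    · have hcount : (x :: L).countP (· ≠ 0) = L.countP (· ≠ 0) + 1 := by simp [hx]
      rw [hcount] at h0 h1
      -- any `s ∈ unitWeightedSums L` other than `t` gives `t = ((t - s) / x) * x + s`
      obtain ⟨s, hs, hst⟩ : ∃ s ∈ unitWeightedSums L, s ≠ t := by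
        by_cases hL : L.countP (· ≠ 0) = 0
        · exact ⟨0, ih (fun _ => rfl) (by omega), (h1 (by omega)).symm⟩
        · have h1m : (-1 : K) ≠ 1 := fun h => h2 (by linear_combination -h)
          obtain ⟨s, hs0, hst⟩ : ∃ s : K, s ≠ 0 ∧ s ≠ t := by
            by_cases ht : t = 1
            · exact ⟨-1, by simp, ht ▸ h1m⟩
            · exact ⟨1, one_ne_zero, Ne.symm ht⟩
          exact ⟨s, ih (by omega) (fun _ => hs0), hst⟩
      refine ⟨(t - s) / x * x, ⟨(t - s) / x, ?_, rfl⟩, s, hs, by field_simp; ring⟩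
      exact isUnit_iff_ne_zero.2 (div_ne_zero (sub_ne_zero.2 hst.symm) hx)

lemma zero_notMem_unitWeightedSums {R : Type*} [Semiring R] [DecidableEq R] {L : List R}
    (hL : L.countP (· ≠ 0) = 1) : 0 ∉ unitWeightedSums L := by
  induction L with
  | nil => simp at hL
  | cons x L ih =>
    rintro ⟨_, ⟨a, ha, rfl⟩, s, hs, hsum : a * x + s = 0⟩
    by_cases hx : x = 0
    · subst hx
      simp only [List.countP_cons, ne_eq, not_true_eq_false, decide_false] at hL
      rw [mul_zero, zero_add] at hsum
      exact ih hL (hsum ▸ hs)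
    · have hL0 : L.countP (· ≠ 0) = 0 := by simpa [hx] using hL
      rw [eq_zero_of_mem_weightedSums (by simpa using hL0) hs, add_zero] at hsum
      exact hx ((IsUnit.mul_right_eq_zero ha).1 hsum)

lemma mul_mem_unitWeightedSums_flatten {R : Type*} [CommSemiring R] {k z : R} {f : List R → R}
    {cs : List (List R)} (hf : ∀ c ∈ cs, k * f c ∈ unitWeightedSums c)
    (hz : z ∈ unitWeightedSums (cs.map f)) : k * z ∈ unitWeightedSums cs.flatten := by
  induction cs generalizing z with
  | nil => simp_all
  | cons c cs ih =>
    obtain ⟨_, ⟨u, hu, rfl⟩, z', hz', rfl⟩ := hz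
    rw [List.flatten_cons, unitWeightedSums, weightedSums_append]
    refine ⟨u * (k * f c), mul_mem_weightedSums (fun a ha => hu.mul ha) (hf c (by simp)),
      k * z', ih (fun c hc => hf c (by simp [hc])) hz', by ring⟩

lemma hasConsecWZS_iff {n : ℕ} {A : Set (ZMod n)} {L : List (ZMod n)} :
    HasConsecWZS A L ↔ ∃ l, l <:+: L ∧ l ≠ [] ∧ 0 ∈ weightedSums A l := by
  simp only [HasConsecWZS, IsWeightedZeroSum, ← mem_weightedSums_iff, List.IsInfix]
  constructor
  · rintro ⟨l₁, l, l₃, rfl, hl, h0⟩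
    exact ⟨l, ⟨l₁, l₃, rfl⟩, hl, h0⟩
  · rintro ⟨l, ⟨l₁, l₃, rfl⟩, hl, h0⟩
    exact ⟨l₁, l, l₃, rfl, hl, h0⟩

namespace ZMod

lemma castHom_image_setOf_isUnit {m n : ℕ} [NeZero n] (h : m ∣ n) :
    castHom h (ZMod m) '' {x | IsUnit x} = {x | IsUnit x} := by
  ext y
  refine ⟨fun ⟨x, hx, hxy⟩ => hxy ▸ hx.map _, fun hy => ?_⟩
  obtain ⟨u, hu⟩ := unitsMap_surjective h hy.unit
  exact ⟨u, u.isUnit, congrArg Units.val hu⟩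

lemma castHom_image_unitWeightedSums {m n : ℕ} [NeZero n] (h : m ∣ n) (L : List (ZMod n)) :
    castHom h (ZMod m) '' unitWeightedSums L = unitWeightedSums (L.map (castHom h (ZMod m))) := by
  rw [unitWeightedSums, image_weightedSums, castHom_image_setOf_isUnit]

lemma exists_eq_natCast_mul_of_castHom_eq_zero {p m : ℕ} {x : ZMod (p * m)}
    (hx : castHom (dvd_mul_right p m) (ZMod p) x = 0) : ∃ y, x = p * y := by
  obtain ⟨k, rfl⟩ := intCast_surjective x
  rw [map_intCast, intCast_zmod_eq_zero_iff_dvd] at hx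
  obtain ⟨j, rfl⟩ := hx
  exact ⟨j, by push_cast; rfl⟩

lemma natCast_mul_eq_zero_iff {p m : ℕ} (hp : p ≠ 0) {z : ZMod (p * m)} :
    (p : ZMod (p * m)) * z = 0 ↔ castHom (dvd_mul_left m p) (ZMod m) z = 0 := by
  obtain ⟨k, rfl⟩ := intCast_surjective z
  rw [map_intCast, intCast_zmod_eq_zero_iff_dvd, ← Int.cast_natCast, ← Int.cast_mul,
    intCast_zmod_eq_zero_iff_dvd, Nat.cast_mul]
  exact Int.mul_dvd_mul_iff_left (by exact_mod_cast hp)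

end ZMod

section Chunks

variable {α : Type*} (f : α → Bool)

def IsGoodChunk (c : List α) : Prop := c ≠ [] ∧ c.countP f ≠ 1

variable {f}

lemma exists_singleton_goodChunks {g : List α} (hg : ∀ x ∈ g, f x = false) :
    ∃ cs : List (List α), cs.flatten = g ∧ cs.length = g.length ∧
      ∀ c ∈ cs, IsGoodChunk f c :=
  ⟨g.map ([·]), by simp [← List.flatMap_def], by simp, by simp +contextual [IsGoodChunk, hg]⟩

lemma forall_eq_false_or_exists_eq_append_cons (s : List α) :
    (∀ x ∈ s, f x = false) ∨
      ∃ g x s₁, s = g ++ x :: s₁ ∧ (∀ y ∈ g, f y = false) ∧ f x = true := by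
  cases h : s.find? f with
  | none => exact .inl (by simpa using List.find?_eq_none.1 h)
  | some x =>
    obtain ⟨hx, g, s₁, rfl, hg⟩ := List.find?_eq_some_iff_append.1 h
    exact .inr ⟨g, x, s₁, rfl, by simpa using hg, hx⟩

lemma exists_prefix_goodChunks (g : List α) (x : α) (s₁ : List α)
    (hg : ∀ y ∈ g, f y = false) (hx : f x = true) :
    ∃ cs ds : List (List α), cs.flatten <+: g ++ x :: s₁ ∧ ds.flatten <+: s₁ ∧
      (∀ c ∈ cs ++ ds, IsGoodChunk f c) ∧
      (g ++ x :: s₁).length ≤ cs.length + ds.length + 1 := by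
  obtain ⟨gs, hgs, hgslen, hgsgood⟩ := exists_singleton_goodChunks hg
  rcases forall_eq_false_or_exists_eq_append_cons (f := f) s₁ with
    hs₁ | ⟨g₁, y, s₂, rfl, hg₁, hy⟩
  · obtain ⟨ds, hds, hdslen, hdsgood⟩ := exists_singleton_goodChunks hs₁
    refine ⟨gs, ds, ?_, hds ▸ List.prefix_refl _, ?_, by simp; omega⟩
    · simp [hgs]
    · simp only [List.mem_append]
      exact fun c hc => hc.elim (hgsgood c) (hdsgood c)
  · obtain ⟨cs₁, ds₁, hcs₁, hds₁, hgood, hlen⟩ :=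
      exists_prefix_goodChunks g₁ y s₂ hg₁ hy
    have hg₁0 : g₁.countP f = 0 := List.countP_eq_zero.2 (by simpa using hg₁)
    refine ⟨gs ++ (x :: g₁ ++ [y]) :: ds₁, cs₁, ?_, by simpa using hcs₁, ?_, ?_⟩
    · simpa [hgs] using hds₁
    · simp only [List.mem_append, List.mem_cons] at hgood ⊢
      rintro c ((hc | rfl | hc) | hc)
      · exact hgsgood c hc
      · exact ⟨by simp, by simp [hg₁0, hx, hy]⟩
      · exact hgood c (.inr hc)
      · exact hgood c (.inl hc)
    · simp only [List.length_append, List.length_cons] at hlen ⊢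
      omega
termination_by s₁.length

lemma exists_infix_flatten_goodChunks {t : ℕ} {s : List α} (hs : 2 * t ≤ s.length) :
    ∃ cs : List (List α), cs.flatten <:+: s ∧ t ≤ cs.length ∧
      ∀ c ∈ cs, IsGoodChunk f c := by
  rcases forall_eq_false_or_exists_eq_append_cons (f := f) s with
    hs' | ⟨g, x, s₁, rfl, hg, hx⟩
  · obtain ⟨cs, hcs, hlen, hgood⟩ := exists_singleton_goodChunks hs'
    exact ⟨cs, hcs ▸ List.infix_refl _, by omega, hgood⟩
  · obtain ⟨cs, ds, hcs, hds, hgood, hlen⟩ := exists_prefix_goodChunks g x s₁ hg hx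
    simp only [List.mem_append] at hgood
    by_cases ht : t ≤ cs.length
    · exact ⟨cs, hcs.isInfix, ht, fun c hc => hgood c (.inl hc)⟩
    · have hs₁ : s₁ <:+: g ++ x :: s₁ :=
        (List.suffix_append_of_suffix (List.suffix_cons x s₁)).isInfix
      exact ⟨ds, hds.isInfix.trans hs₁, by omega, fun c hc => hgood c (.inr hc)⟩

end Chunks

lemma List.IsInfix.infix_or_infix_or_mem {α : Type*} {l A B : List α} {x : α}
    (h : l <:+: A ++ x :: B) : l <:+: A ∨ l <:+: B ∨ x ∈ l := by
  rcases List.infix_append_iff.1 h with h | h | ⟨l₁, l₂, rfl, h₁, h₂⟩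
  · exact .inl h
  · rcases List.infix_cons_iff.1 h with h | h
    · rcases List.prefix_cons_iff.1 h with rfl | ⟨t, rfl, -⟩
      · exact .inl List.nil_infix
      · exact .inr (.inr List.mem_cons_self)
    · exact .inr (.inl h)
  · rcases List.prefix_cons_iff.1 h₂ with rfl | ⟨t, rfl, -⟩
    · exact .inl (by simpa using h₁.isInfix)
    · exact .inr (.inr (by simp))

lemma exists_natCast_mul_mem_unitWeightedSums {p m : ℕ} [NeZero (p * m)] (hp : p.Prime)
    (hp2 : p ≠ 2) {c : List (ZMod (p * m))}
    (hc : (c.map (ZMod.castHom (dvd_mul_right p m) (ZMod p))).countP (· ≠ 0) ≠ 1) :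
    ∃ y, (p : ZMod (p * m)) * y ∈ unitWeightedSums c := by
  have := Fact.mk hp
  have h2 : (2 : ZMod p) ≠ 0 := Ring.two_ne_zero (by rwa [ZMod.ringChar_zmod_n])
  have h0 := mem_unitWeightedSums_of_countP h2 (fun _ => rfl) (absurd · hc)
  rw [← ZMod.castHom_image_unitWeightedSums] at h0
  obtain ⟨x, hx, hx0⟩ := h0
  obtain ⟨y, rfl⟩ := ZMod.exists_eq_natCast_mul_of_castHom_eq_zero hx0
  exact ⟨y, hx⟩

lemma hasConsecWZS_of_two_mul_le {p m t : ℕ} (hp : p.Prime) (hp2 : p ≠ 2) (hm : m ≠ 0)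
    (ih : ∀ L : List (ZMod m), t ≤ L.length → HasConsecWZS {x | IsUnit x} L)
    (L : List (ZMod (p * m))) (hL : 2 * t ≤ L.length) : HasConsecWZS {x | IsUnit x} L := by
  have : NeZero (p * m) := ⟨mul_ne_zero hp.ne_zero hm⟩
  set φ := ZMod.castHom (dvd_mul_right p m) (ZMod p)
  set ψ := ZMod.castHom (dvd_mul_left m p) (ZMod m)
  obtain ⟨cs, hcsL, hcslen, hgood⟩ :=
    exists_infix_flatten_goodChunks (f := fun x => φ x ≠ 0) hL
  have hchunk : ∀ c, ∃ y, IsGoodChunk (fun x => φ x ≠ 0) c →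
      (p : ZMod (p * m)) * y ∈ unitWeightedSums c := by
    intro c
    by_cases hc : IsGoodChunk (fun x => φ x ≠ 0) c
    · obtain ⟨y, hy⟩ := exists_natCast_mul_mem_unitWeightedSums hp hp2
        (by rw [List.countP_map]; exact hc.2)
      exact ⟨y, fun _ => hy⟩
    · exact ⟨0, (absurd · hc)⟩
  choose Y hY using hchunk
  obtain ⟨l, hl, hlne, hl0 : 0 ∈ unitWeightedSums l⟩ :=
    hasConsecWZS_iff.1 (ih (cs.map (ψ ∘ Y)) (by simpa using hcslen))
  obtain ⟨ds, hds, rfl⟩ := List.infix_map_iff.1 hl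
  rw [← List.map_map, ← ZMod.castHom_image_unitWeightedSums] at hl0
  obtain ⟨z, hz, hψz⟩ := hl0
  refine hasConsecWZS_iff.2 ⟨ds.flatten, hds.flatten.trans hcsL, ?_, ?_⟩
  · obtain ⟨c, hc⟩ := List.exists_mem_of_ne_nil ds (by simpa using hlne)
    exact fun h => (hgood c (hds.subset hc)).1 (List.flatten_eq_nil_iff.1 h c hc)
  · rw [← (ZMod.natCast_mul_eq_zero_iff hp.ne_zero).2 hψz]
    exact mul_mem_unitWeightedSums_flatten (fun c hc => hY c (hgood c (hds.subset hc))) hz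

theorem hasConsecWZS_of_two_pow_le (ps : List ℕ) (hps : ∀ p ∈ ps, p.Prime ∧ p ≠ 2)
    (L : List (ZMod ps.prod)) (hL : 2 ^ ps.length ≤ L.length) :
    HasConsecWZS {x | IsUnit x} L := by
  induction ps with
  | nil =>
    obtain ⟨x, L, rfl⟩ := List.exists_cons_of_length_pos hL
    have : Subsingleton (ZMod ([] : List ℕ).prod) := ZMod.subsingleton_iff.2 rfl
    refine hasConsecWZS_iff.2
      ⟨[x], (List.prefix_append [x] L).isInfix, List.cons_ne_nil _ _, ?_⟩
    exact Subsingleton.elim (1 * x + 0) 0 ▸ ⟨_, ⟨1, isUnit_one, rfl⟩, 0, rfl, rfl⟩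
  | cons p ps ih =>
    simp only [List.mem_cons, forall_eq_or_imp] at hps
    exact hasConsecWZS_of_two_mul_le hps.1.1 hps.1.2
      (List.prod_ne_zero fun h => Nat.not_prime_zero (hps.2 0 h).1) (ih hps.2) L
      (by simpa [pow_succ, mul_comm] using hL)

def extremalSeq : List ℕ → List ℕ
  | [] => []
  | p :: ps => (extremalSeq ps).map (p * ·) ++ 1 :: (extremalSeq ps).map (p * ·)

lemma length_extremalSeq (ps : List ℕ) : (extremalSeq ps).length = 2 ^ ps.length - 1 := by
  induction ps with
  | nil => rfl
  | cons p ps ih =>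
    simp only [extremalSeq, List.length_append, List.length_cons, List.length_map, ih, pow_succ]
    have := Nat.one_le_two_pow (n := ps.length)
    omega

lemma zero_notMem_unitWeightedSums_of_infix_map_mul {p m : ℕ} (hp : p ≠ 0) {S : List ℕ}
    (hS : ¬ HasConsecWZS {x | IsUnit x} (S.map (Nat.cast : ℕ → ZMod m)))
    {l : List (ZMod (p * m))} (hl : l <:+: (S.map Nat.cast).map ((p : ZMod (p * m)) * ·))
    (hne : l ≠ []) : 0 ∉ unitWeightedSums l := by
  intro hl0
  obtain ⟨l', hl', rfl⟩ := List.infix_map_iff.1 hl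
  obtain ⟨l'', hl'', rfl⟩ := List.infix_map_iff.1 hl'
  rw [unitWeightedSums, weightedSums_map_mul_left] at hl0
  obtain ⟨z, hz, hpz⟩ := hl0
  have hψz := map_mem_unitWeightedSums (ZMod.castHom (dvd_mul_left m p) (ZMod m)) hz
  rw [(ZMod.natCast_mul_eq_zero_iff hp).1 hpz, List.map_map] at hψz
  exact hS (hasConsecWZS_iff.2 ⟨l''.map Nat.cast, hl''.map _, by simpa using hne,
    by simpa [Function.comp_def] using hψz⟩)

lemma not_hasConsecWZS_map_mul_append_one {p m : ℕ} (hp : p.Prime) {S : List ℕ}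
    (hS : ¬ HasConsecWZS {x | IsUnit x} (S.map (Nat.cast : ℕ → ZMod m))) :
    ¬ HasConsecWZS {x | IsUnit x}
      ((S.map (p * ·) ++ 1 :: S.map (p * ·)).map (Nat.cast : ℕ → ZMod (p * m))) := by
  have := Fact.mk hp
  set φ := ZMod.castHom (dvd_mul_right p m) (ZMod p)
  set B := (S.map (Nat.cast : ℕ → ZMod (p * m))).map ((p : ZMod (p * m)) * ·)
  have hB : (S.map (p * ·) ++ 1 :: S.map (p * ·)).map Nat.cast = B ++ 1 :: B := by
    simp [B, Function.comp_def]
  rw [hB, hasConsecWZS_iff]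
  rintro ⟨l, hl, hlne, hl0 : 0 ∈ unitWeightedSums l⟩
  rcases hl.infix_or_infix_or_mem with hl | hl | h1
  · exact zero_notMem_unitWeightedSums_of_infix_map_mul hp.ne_zero hS hl hlne hl0
  · exact zero_notMem_unitWeightedSums_of_infix_map_mul hp.ne_zero hS hl hlne hl0
  · have hBφ : (B.map φ).countP (· ≠ 0) = 0 := by simp [B]
    have hcount : (l.map φ).countP (· ≠ 0) = 1 := by
      refine le_antisymm ?_ (List.countP_pos_iff.2 ⟨φ 1, List.mem_map_of_mem h1, by simp⟩)
      calc (l.map φ).countP (· ≠ 0) ≤ ((B ++ 1 :: B).map φ).countP (· ≠ 0) :=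
            (hl.map φ).countP_le
        _ = 1 := by
          rw [List.map_append, List.map_cons, List.countP_append, List.countP_cons, hBφ, map_one]
          simp
    exact zero_notMem_unitWeightedSums hcount (map_zero φ ▸ map_mem_unitWeightedSums φ hl0)

theorem not_hasConsecWZS_extremalSeq (ps : List ℕ) (hps : ∀ p ∈ ps, p.Prime) :
    ¬ HasConsecWZS {x | IsUnit x} ((extremalSeq ps).map (Nat.cast : ℕ → ZMod ps.prod)) := by
  induction ps with
  | nil => simp [extremalSeq, hasConsecWZS_iff]
  | cons p ps ih =>
    simp only [List.mem_cons, forall_eq_or_imp] at hps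
    exact not_hasConsecWZS_map_mul_append_one hps.1 (ih hps.2)

/-- For odd `n`, `C_{U(n)}(n) = 2^{Ω(n)}`. -/
theorem C_units_eq_odd (n : ℕ) (hodd : Odd n) :
    (∀ L : List (ZMod n), L.length = 2 ^ n.primeFactorsList.length →
      HasConsecWZS {x : ZMod n | IsUnit x} L) ∧
    (∃ L : List (ZMod n), L.length = 2 ^ n.primeFactorsList.length - 1 ∧
      ¬ HasConsecWZS {x : ZMod n | IsUnit x} L) := by
  have hprod : n.primeFactorsList.prod = n :=
    Nat.prod_primeFactorsList (by rintro rfl; simp at hodd)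
  have hprime : ∀ p ∈ n.primeFactorsList, p.Prime := fun _ => Nat.prime_of_mem_primeFactorsList
  have hodd_primes : ∀ p ∈ n.primeFactorsList, p.Prime ∧ p ≠ 2 := fun p hp =>
    ⟨hprime p hp, by
      rintro rfl
      exact hodd.not_two_dvd_nat (Nat.dvd_of_mem_primeFactorsList hp)⟩
  have upper := hasConsecWZS_of_two_pow_le _ hodd_primes
  have lower := not_hasConsecWZS_extremalSeq _ hprime
  rw [hprod] at upper lower
  exact ⟨fun L hL => upper L hL.ge, _, by simp [length_extremalSeq], lower⟩
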